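/- Let θ ∈ [0, π/3]. The Cygan distance between the points [4k cos θ, 8k sin 2θ] (the center of 𝓘ₖ⁺) and [0,0] equals 4√(|k| cos θ)·|k cos θ - i sin θ|^{1/2}, which is ≥ 2√2 for every nonzero integer k. -/

import Mathlib

open Complex Real

/-- The Cygan distance on the Heisenberg group ℂ × ℝ. -/
noncomputable def cygan (p q : ℂ × ℝ) : ℝ :=
  Real.sqrt (‖((‖p.1 - q.1‖ ^ 2 : ℝ) : ℂ) -
    Complex.I * ((p.2 - q.2 + 2 * (p.1 * (starRingEnd ℂ) q.1).im : ℝ) : ℂ)‖)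

/-! Since sin 2θ = 2 sin θ cos θ, the gauge of the centre factorises as
|z|² − i t = 16 k cos θ · (k cos θ − i sin θ). On [0, π/3] we have cos θ ≥ 1/2, and
|k cos θ − i sin θ|² = k² cos² θ + sin² θ ≥ 1 for k ≠ 0, so the squared distance is at least 8. -/

lemma cygan_ofReal_zero (x t : ℝ) : cygan ((x : ℂ), t) (0, 0) = √‖(x : ℂ) ^ 2 - I * t‖ := by
  simp [cygan, sq_abs]

lemma half_le_cos_of_nonneg_of_le_pi_div_three {θ : ℝ} (h0 : 0 ≤ θ) (h1 : θ ≤ π / 3) :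
    1 / 2 ≤ Real.cos θ := by
  rw [← cos_pi_div_three]
  exact cos_le_cos_of_nonneg_of_le_pi h0 (by linarith [pi_pos]) h1

lemma one_le_norm_mul_cos_sub_I_mul_sin {a : ℝ} (ha : 1 ≤ |a|) (θ : ℝ) :
    1 ≤ ‖(a : ℂ) * Real.cos θ - I * Real.sin θ‖ := by
  have hsq : ‖(a : ℂ) * Real.cos θ - I * Real.sin θ‖ ^ 2 =
      a ^ 2 * Real.cos θ ^ 2 + Real.sin θ ^ 2 := by
    rw [Complex.sq_norm, show (a : ℂ) * Real.cos θ - I * Real.sin θ =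
      ((a * Real.cos θ : ℝ) : ℂ) + ((-Real.sin θ : ℝ) : ℂ) * I by push_cast; ring,
      normSq_add_mul_I]
    ring
  have ha2 : 1 ≤ a ^ 2 := by nlinarith [sq_abs a]
  nlinarith [Real.sin_sq_add_cos_sq θ, sq_nonneg (Real.cos θ),
    norm_nonneg ((a : ℂ) * Real.cos θ - I * Real.sin θ)]

lemma cygan_center_zero (k θ : ℝ) (hc : 0 ≤ Real.cos θ) :
    cygan ((4 * k * Real.cos θ, 8 * k * Real.sin (2 * θ))) ((0, 0)) =
      √(16 * (|k| * Real.cos θ) * ‖(k : ℂ) * Real.cos θ - I * Real.sin θ‖) := by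
  have hfactor : ((4 * k * Real.cos θ : ℝ) : ℂ) ^ 2 - I * ((8 * k * Real.sin (2 * θ) : ℝ) : ℂ) =
      ((16 * k * Real.cos θ : ℝ) : ℂ) * ((k : ℂ) * Real.cos θ - I * Real.sin θ) := by
    push_cast [Real.sin_two_mul]
    ring
  rw [show 4 * (k : ℂ) * Real.cos θ = ((4 * k * Real.cos θ : ℝ) : ℂ) by push_cast; ring,
    cygan_ofReal_zero, hfactor, norm_mul, norm_real, Real.norm_eq_abs, abs_mul, abs_mul,
    abs_of_nonneg hc, abs_of_pos (by norm_num : (0 : ℝ) < 16), mul_assoc 16]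

theorem cygan_distance_centers (θ : ℝ) (hθ0 : 0 ≤ θ) (hθ1 : θ ≤ π / 3)
    (k : ℤ) (hk : k ≠ 0) :
    cygan ((4 * k * Real.cos θ, 8 * k * Real.sin (2 * θ))) ((0, 0)) =
      4 * Real.sqrt (|(k : ℝ)| * Real.cos θ) *
        Real.sqrt (‖(k : ℂ) * Real.cos θ - Complex.I * Real.sin θ‖) ∧
    2 * Real.sqrt 2 ≤
      cygan ((4 * k * Real.cos θ, 8 * k * Real.sin (2 * θ))) ((0, 0)) := by
  have hc := half_le_cos_of_nonneg_of_le_pi_div_three hθ0 hθ1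
  have hk1 : (1 : ℝ) ≤ |(k : ℝ)| := by exact_mod_cast Int.one_le_abs hk
  have hw := one_le_norm_mul_cos_sub_I_mul_sin hk1 θ
  have hdist := cygan_center_zero k θ (by linarith)
  rw [ofReal_intCast] at hdist hw
  rw [hdist]
  constructor
  · rw [sqrt_mul (by positivity), sqrt_mul (by norm_num),
      show √16 = 4 by rw [show (16 : ℝ) = 4 ^ 2 by norm_num, sqrt_sq (by norm_num)]]
  · have hkc : 1 / 2 ≤ |(k : ℝ)| * Real.cos θ := by nlinarith
    calc 2 * √2 = √8 := by
          rw [show (8 : ℝ) = 2 ^ 2 * 2 by norm_num, sqrt_mul (by norm_num), sqrt_sq (by norm_num)]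
      _ ≤ _ := sqrt_le_sqrt (by nlinarith [mul_le_mul hkc hw zero_le_one (by positivity)])
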